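/- If X̂ = x̂ x̂ᴴ is a rank-1 positive semidefinite solution of the semidefinite program minimizing trace(C X) subject to diag(X) = b̃ and X ⪰ 0 (where C = [A,−y]ᴴ[A,−y] and b̃ = [b₁²,…,b_K²,1]), then the vector ŝ = x̂_{1:K} / x̂_{K+1} satisfies |ŝ_k| = b_k for all k and minimizes ‖A s − y‖₂² over all s ∈ ℂ^K with |s_k| = b_k for all k. -/

import Mathlib

/-!
The diagonal constraint forces `‖x̂ i‖ ^ 2 = b̃ i`, so `‖x̂ (K+1)‖ = 1` and `x̂ = x̂ (K+1) • (ŝ, 1)`;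
the unimodular factor cancels in `x̂ x̂ᴴ`, hence `X̂ = (ŝ, 1) (ŝ, 1)ᴴ`. For every `s` with `‖s k‖ = b k`
the rank-one matrix `(s, 1) (s, 1)ᴴ` is feasible, and `re tr (Ãᴴ Ã v vᴴ) = ‖Ã v‖² = ‖A s - y‖²`
for `v = (s, 1)`, so optimality of `X̂` is exactly the claimed inequality.
-/

open Matrix ComplexOrder

section RankOne

variable {𝕜 : Type*} [RCLike 𝕜] {m n : Type*}

theorem Matrix.vecMulVec_self_star_apply_self (v : n → 𝕜) (i : n) :
    vecMulVec v (star v) i i = ((‖v i‖ ^ 2 : ℝ) : 𝕜) := by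
  simp [vecMulVec_apply, RCLike.mul_conj]

theorem Matrix.norm_eq_of_vecMulVec_self_star_apply_self {v : n → 𝕜} {i : n} {r : ℝ}
    (hr : 0 ≤ r) (h : vecMulVec v (star v) i i = ((r ^ 2 : ℝ) : 𝕜)) : ‖v i‖ = r := by
  rw [vecMulVec_self_star_apply_self, RCLike.ofReal_inj] at h
  exact (pow_left_inj₀ (norm_nonneg _) hr two_ne_zero).1 h

theorem Matrix.vecMulVec_smul_self_star {c : 𝕜} (hc : ‖c‖ = 1) (v : n → 𝕜) :
    vecMulVec (c • v) (star (c • v)) = vecMulVec v (star v) := by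
  ext i j
  have hcc : c * (starRingEnd 𝕜) c = 1 := by simp [RCLike.mul_conj, hc]
  simp only [vecMulVec_apply, Pi.smul_apply, Pi.star_apply, smul_eq_mul, star_mul',
    RCLike.star_def]
  linear_combination (v i * (starRingEnd 𝕜) (v j)) * hcc

theorem Matrix.re_trace_conjTranspose_mul_self_mul_vecMulVec [Fintype m] [Fintype n]
    (B : Matrix m n 𝕜) (v : n → 𝕜) :
    RCLike.re (Bᴴ * B * vecMulVec v (star v)).trace = ∑ i, ‖(B *ᵥ v) i‖ ^ 2 := by
  rw [mul_vecMulVec, trace_vecMulVec, ← mulVec_mulVec, dotProduct_comm, dotProduct_mulVec,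
    vecMul_conjTranspose, star_star]
  simp only [dotProduct, Pi.star_apply, RCLike.star_def, RCLike.conj_mul, map_sum]
  norm_cast

theorem Matrix.vecMulVec_self_star_snoc_one_apply_self {d : ℕ} (s : Fin d → 𝕜)
    (i : Fin (d + 1)) :
    vecMulVec (Fin.snoc s 1 : Fin (d + 1) → 𝕜) (star (Fin.snoc s 1)) i i =
      (Fin.snoc (fun k => ((‖s k‖ ^ 2 : ℝ) : 𝕜)) 1 : Fin (d + 1) → 𝕜) i := by
  rw [vecMulVec_self_star_apply_self]
  refine Fin.lastCases ?_ (fun k => ?_) i <;> simp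

end RankOne

theorem Fin.smul_snoc_div_last {F : Type*} [Field F] {n : ℕ} (x : Fin (n + 1) → F)
    (hx : x (Fin.last n) ≠ 0) :
    x (Fin.last n) • (Fin.snoc (fun k => x k.castSucc / x (Fin.last n)) 1 : Fin (n + 1) → F) =
      x := by
  funext i
  refine Fin.lastCases ?_ (fun k => ?_) i <;> simp [mul_div_cancel₀ _ hx]

theorem Matrix.snoc_neg_mulVec_snoc_one {R m : Type*} [Ring R] [Fintype m] {n : ℕ}
    (A : Matrix m (Fin n) R) (y : m → R) (t : Fin n → R) :
    (fun i => Fin.snoc (A i) (-y i) : Matrix m (Fin (n + 1)) R) *ᵥ Fin.snoc t 1 =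
      A *ᵥ t - y := by
  funext i
  simp [mulVec, dotProduct, Fin.sum_univ_castSucc, sub_eq_add_neg]

/-- If the SDP relaxation has a rank-1 solution X̂ = x̂x̂ᴴ, then ŝ = x̂_{1:K}/x̂_{K+1}
is feasible and globally solves the phase least-squares problem. -/
theorem sdp_rank_one_solution_solves_phase_ls (M K : ℕ)
    (A : Matrix (Fin M) (Fin K) ℂ) (y : Fin M → ℂ) (b : Fin K → ℝ)
    (hb : ∀ k, 0 < b k)
    (Atil : Matrix (Fin M) (Fin (K + 1)) ℂ)
    (hAtil : Atil = fun m => Fin.snoc (fun k => A m k) (-y m))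
    (C : Matrix (Fin (K + 1)) (Fin (K + 1)) ℂ) (hC : C = Atilᴴ * Atil)
    (btil : Fin (K + 1) → ℂ) (hbtil : btil = Fin.snoc (fun k => ((b k : ℂ)) ^ 2) 1)
    (feasible : Matrix (Fin (K + 1)) (Fin (K + 1)) ℂ → Prop)
    (hfeas : feasible = fun X => X.PosSemidef ∧ ∀ i, X i i = btil i)
    (xhat : Fin (K + 1) → ℂ)
    (Xhat : Matrix (Fin (K + 1)) (Fin (K + 1)) ℂ)
    (hXhat : Xhat = Matrix.vecMulVec xhat (fun j => star (xhat j)))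
    (hXfeas : feasible Xhat)
    (hXopt : ∀ X, feasible X → ((C * Xhat).trace).re ≤ ((C * X).trace).re)
    (shat : Fin K → ℂ)
    (hshat : shat = fun k => xhat k.castSucc / xhat (Fin.last K)) :
    (∀ k, ‖shat k‖ = b k) ∧
      ∀ s : Fin K → ℂ, (∀ k, ‖s k‖ = b k) →
        ∑ m, ‖(A.mulVec shat - y) m‖ ^ 2 ≤
          ∑ m, ‖(A.mulVec s - y) m‖ ^ 2 := by
  rw [show (fun j => star (xhat j)) = star xhat from rfl] at hXhat
  subst hC hbtil hfeas hXhat hshat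
  have hobj : ∀ v,
      ((Atilᴴ * Atil * vecMulVec v (star v)).trace).re = ∑ m, ‖(Atil *ᵥ v) m‖ ^ 2 :=
    re_trace_conjTranspose_mul_self_mul_vecMulVec Atil
  have hres : ∀ t, Atil *ᵥ Fin.snoc t 1 = A *ᵥ t - y := by
    subst hAtil
    exact snoc_neg_mulVec_snoc_one A y
  obtain ⟨-, hdiag⟩ := hXfeas
  have hlast : ‖xhat (Fin.last K)‖ = 1 :=
    norm_eq_of_vecMulVec_self_star_apply_self zero_le_one (by simpa using hdiag (Fin.last K))
  have hlast0 : xhat (Fin.last K) ≠ 0 := norm_ne_zero_iff.1 (by simp [hlast])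
  refine ⟨fun k => ?_, fun s hs => ?_⟩
  · have hk : ‖xhat k.castSucc‖ = b k :=
      norm_eq_of_vecMulVec_self_star_apply_self (hb k).le (by simpa using hdiag k.castSucc)
    simp [hk, hlast]
  · have hrank := vecMulVec_smul_self_star hlast
      (Fin.snoc (fun k => xhat k.castSucc / xhat (Fin.last K)) 1 : Fin (K + 1) → ℂ)
    rw [Fin.smul_snoc_div_last xhat hlast0] at hrank
    have hopt := hXopt _ ⟨posSemidef_vecMulVec_self_star (Fin.snoc s 1), fun i => ?_⟩
    · rwa [hrank, hobj, hobj, hres, hres] at hopt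
    · rw [vecMulVec_self_star_snoc_one_apply_self]
      refine Fin.lastCases ?_ (fun k => ?_) i <;> simp [hs]
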